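/- arXiv:1811.06275 — 3 statements merged into one kernel-verified Lean document; each statement's English description precedes it below -/
import Mathlib

section
/- Let P_φ : L¹([0,1]) → L¹([0,1]) be the operator defined by P_φ f(x) = (1/2) f(x/2) + (1/2) f((x+1)/2), and let g ∈ L¹([0,1]). Then the equation φ = P_φ φ + g has a solution in L¹([0,1]) if and only if the series Σ_{k=0}^∞ P_φ^k g converges in L¹([0,1]). Moreover, every solution φ ∈ L¹([0,1]) of this equation is of the form φ = Σ_{k=0}^∞ P_φ^k g + c, where c is a real constant. -/
open MeasureTheory Filter Set Topology

noncomputable abbrev μ01 : MeasureTheory.Measure ℝ := MeasureTheory.volume.restrict (Set.Icc 0 1)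

/-- The constant function with value `c`, as an element of `L¹([0,1])`. -/
noncomputable def constL1 (c : ℝ) : Lp ℝ 1 μ01 :=
  (MeasureTheory.memLp_const c).toLp fun _ : ℝ => c

/-!
On functions, `P` is the average `dyadicTransfer` over the two inverse branches `x ↦ x / 2` and
`x ↦ (x + 1) / 2` of the doubling map. It preserves integrals and satisfies `|P h| ≤ P |h|`, so it
is an `L¹` contraction; it also halves Lipschitz constants, so for a `K`-Lipschitz `h` the iterate
`Pⁿ h` lies within `K / 2ⁿ` of its mean, which is `∫ h`. Lipschitz functions are dense and the
`Pⁿ` are equicontinuous, hence `Pⁿ h → ∫ h` for every `h ∈ L¹`. If `φ = P φ + g`, the partial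
sums of `∑ Pᵏ g` telescope to `φ - Pⁿ φ → φ - ∫ φ`; conversely, any limit `s` of the partial sums
satisfies `s = P s + g` by continuity of `P`.
-/

open scoped ENNReal NNReal

instance : IsProbabilityMeasure μ01 := ⟨by simp⟩

lemma map_volume_add_div_two (t : ℝ) :
    volume.map (fun x : ℝ => (x + t) / 2) = (2 : ℝ≥0∞) • volume := by
  have hcomp : (fun x : ℝ => (x + t) / 2) = (fun y => 2⁻¹ * y) ∘ (· + t) := by
    ext x; simp [div_eq_inv_mul]
  rw [hcomp, ← Measure.map_map (by fun_prop) (by fun_prop), map_add_right_eq_self,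
    Real.map_volume_mul_left (by norm_num)]
  norm_num

lemma map_μ01_add_div_two (t : ℝ) :
    μ01.map (fun x : ℝ => (x + t) / 2) =
      (2 : ℝ≥0∞) • volume.restrict (Icc (t / 2) ((1 + t) / 2)) := by
  have hpre : (fun x : ℝ => (x + t) / 2) ⁻¹' Icc (t / 2) ((1 + t) / 2) = Icc 0 1 := by
    ext x
    simp only [mem_preimage, mem_Icc]
    constructor <;> rintro ⟨h₁, h₂⟩ <;> constructor <;> linarith
  rw [← Measure.restrict_smul, ← map_volume_add_div_two t,
    Measure.restrict_map (by fun_prop) measurableSet_Icc, hpre]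

lemma map_μ01_add_div_two_le {t : ℝ} (ht : t ∈ Icc (0 : ℝ) 1) :
    μ01.map (fun x : ℝ => (x + t) / 2) ≤ (2 : ℝ≥0∞) • μ01 := by
  rw [map_μ01_add_div_two]
  gcongr
  exact Measure.restrict_mono_set volume
    (Icc_subset_Icc (by linarith [ht.1]) (by linarith [ht.2]))

lemma quasiMeasurePreserving_add_div_two {t : ℝ} (ht : t ∈ Icc (0 : ℝ) 1) :
    Measure.QuasiMeasurePreserving (fun x : ℝ => (x + t) / 2) μ01 μ01 :=
  ⟨by fun_prop, Measure.absolutelyContinuous_of_le_smul (map_μ01_add_div_two_le ht)⟩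

lemma average_map_μ01_add_div_two :
    (2⁻¹ : ℝ≥0∞) • μ01.map (fun x : ℝ => (x + 0) / 2)
      + (2⁻¹ : ℝ≥0∞) • μ01.map (fun x : ℝ => (x + 1) / 2) = μ01 := by
  rw [map_μ01_add_div_two, map_μ01_add_div_two, smul_smul, smul_smul,
    ENNReal.inv_mul_cancel two_ne_zero ENNReal.ofNat_ne_top, one_smul, one_smul,
    ← Measure.restrict_union_add_inter _ measurableSet_Icc]
  norm_num

noncomputable def dyadicTransfer (H : ℝ → ℝ) : ℝ → ℝ :=
  fun x => (1 / 2) * H (x / 2) + (1 / 2) * H ((x + 1) / 2)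

lemma integrable_map_add_div_two {t : ℝ} (ht : t ∈ Icc (0 : ℝ) 1) {H : ℝ → ℝ}
    (hH : Integrable H μ01) : Integrable H (μ01.map (fun x : ℝ => (x + t) / 2)) :=
  (hH.smul_measure ENNReal.ofNat_ne_top).mono_measure (map_μ01_add_div_two_le ht)

lemma integrable_comp_add_div_two {t : ℝ} (ht : t ∈ Icc (0 : ℝ) 1) {H : ℝ → ℝ}
    (hH : Integrable H μ01) : Integrable (fun x => H ((x + t) / 2)) μ01 :=
  (integrable_map_add_div_two ht hH).comp_measurable (by fun_prop)

lemma integrable_dyadicTransfer {H : ℝ → ℝ} (hH : Integrable H μ01) :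
    Integrable (dyadicTransfer H) μ01 := by
  have h₀ := integrable_comp_add_div_two (t := 0) (by norm_num) hH
  simp only [add_zero] at h₀
  exact (h₀.const_mul _).add ((integrable_comp_add_div_two (by norm_num) hH).const_mul _)

lemma integral_dyadicTransfer {H : ℝ → ℝ} (hH : Integrable H μ01) :
    ∫ x, dyadicTransfer H x ∂μ01 = ∫ x, H x ∂μ01 := by
  have hmap : ∀ t ∈ Icc (0 : ℝ) 1,
      ∫ x, H ((x + t) / 2) ∂μ01 = ∫ x, H x ∂μ01.map (fun x : ℝ => (x + t) / 2) := fun t ht =>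
    (integral_map (by fun_prop) (hH.aestronglyMeasurable.mono_ac
      (quasiMeasurePreserving_add_div_two ht).absolutelyContinuous)).symm
  have h₀ := integrable_comp_add_div_two (t := 0) (by norm_num) hH
  have h₁ := integrable_comp_add_div_two (t := 1) (by norm_num) hH
  conv_rhs => rw [← average_map_μ01_add_div_two]
  rw [integral_add_measure ((integrable_map_add_div_two (by norm_num) hH).smul_measure (by simp))
    ((integrable_map_add_div_two (by norm_num) hH).smul_measure (by simp)), integral_smul_measure,
    integral_smul_measure, ← hmap 0 (by norm_num), ← hmap 1 (by norm_num)]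
  simp only [add_zero, dyadicTransfer] at h₀ ⊢
  rw [integral_add (h₀.const_mul _) (h₁.const_mul _), integral_const_mul, integral_const_mul]
  norm_num

lemma dyadicTransfer_congr_ae {H H' : ℝ → ℝ} (h : H =ᵐ[μ01] H') :
    dyadicTransfer H =ᵐ[μ01] dyadicTransfer H' := by
  have h₀ := (quasiMeasurePreserving_add_div_two (t := 0) (by norm_num)).ae_eq_comp h
  have h₁ := (quasiMeasurePreserving_add_div_two (t := 1) (by norm_num)).ae_eq_comp h
  filter_upwards [h₀, h₁] with x hx₀ hx₁
  simp only [Function.comp_apply, add_zero] at hx₀ hx₁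
  simp only [dyadicTransfer, hx₀, hx₁]

lemma abs_dyadicTransfer_le (H : ℝ → ℝ) (x : ℝ) :
    |dyadicTransfer H x| ≤ dyadicTransfer (fun y => |H y|) x := by
  simp only [dyadicTransfer]
  refine (abs_add_le _ _).trans_eq ?_
  simp only [abs_mul, abs_of_pos (by norm_num : (0 : ℝ) < 1 / 2)]

lemma lipschitzWith_dyadicTransfer {K : ℝ≥0} {H : ℝ → ℝ} (hH : LipschitzWith K H) :
    LipschitzWith (K / 2) (dyadicTransfer H) := by
  refine LipschitzWith.of_dist_le_mul fun x y => ?_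
  have d₀ := hH.dist_le_mul (x / 2) (y / 2)
  have d₁ := hH.dist_le_mul ((x + 1) / 2) ((y + 1) / 2)
  simp only [Real.dist_eq, dyadicTransfer] at d₀ d₁ ⊢
  rw [show x / 2 - y / 2 = (x - y) / 2 by ring, abs_div, abs_two] at d₀
  rw [show (x + 1) / 2 - (y + 1) / 2 = (x - y) / 2 by ring, abs_div, abs_two] at d₁
  calc _ = |(1 / 2) * (H (x / 2) - H (y / 2))
          + (1 / 2) * (H ((x + 1) / 2) - H ((y + 1) / 2))| := by
        congr 1; ring
    _ ≤ (1 / 2) * |H (x / 2) - H (y / 2)| + (1 / 2) * |H ((x + 1) / 2) - H ((y + 1) / 2)| := by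
        refine (abs_add_le _ _).trans_eq ?_
        simp only [abs_mul, abs_of_pos (by norm_num : (0 : ℝ) < 1 / 2)]
    _ ≤ _ := by push_cast; linarith

lemma lipschitzWith_iterate_dyadicTransfer {K : ℝ≥0} {H : ℝ → ℝ} (hH : LipschitzWith K H)
    (n : ℕ) :
    LipschitzWith (K / 2 ^ n) (dyadicTransfer^[n] H) := by
  induction n with
  | zero => simpa using hH
  | succ n ih =>
    rw [Function.iterate_succ_apply', pow_succ, ← div_div]
    exact lipschitzWith_dyadicTransfer ih

lemma norm_sub_constL1_integral_le {f : Lp ℝ 1 μ01} {H : ℝ → ℝ} {K : ℝ≥0} (hf : f =ᵐ[μ01] H)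
    (hH : LipschitzWith K H) : ‖f - constL1 (∫ x, f x ∂μ01)‖ ≤ K := by
  have hosc : ∀ x ∈ Icc (0 : ℝ) 1, ‖H x - ∫ y, f y ∂μ01‖ ≤ K := by
    intro x hx
    have hmean : H x - ∫ y, f y ∂μ01 = ∫ y, (H x - H y) ∂μ01 := by
      rw [integral_sub (integrable_const _) ((L1.integrable_coeFn f).congr hf),
        integral_congr_ae hf]
      simp
    have hbound : ∀ᵐ y ∂μ01, ‖H x - H y‖ ≤ K := by
      filter_upwards [ae_restrict_mem measurableSet_Icc] with y hy
      calc ‖H x - H y‖ = dist (H x) (H y) := (dist_eq_norm _ _).symm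
        _ ≤ K * dist x y := hH.dist_le_mul x y
        _ ≤ K * 1 := by gcongr; exact Real.dist_le_of_mem_Icc_01 hx hy
        _ = K := mul_one _
    simpa [hmean] using norm_integral_le_of_norm_le_const hbound
  have hconst : (constL1 (∫ x, f x ∂μ01) : ℝ → ℝ) =ᵐ[μ01] fun _ => ∫ x, f x ∂μ01 :=
    MemLp.coeFn_toLp _
  refine (Lp.norm_le_of_ae_bound K.coe_nonneg ?_).trans_eq (by simp [measureUnivNNReal])
  filter_upwards [Lp.coeFn_sub f (constL1 _), hf, hconst, ae_restrict_mem measurableSet_Icc]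
    with x hsub hfx hcx hx
  rw [hsub, Pi.sub_apply, hfx, hcx]
  exact hosc x hx

section Telescoping

variable {R E : Type*} [Ring R] [AddCommGroup E] [TopologicalSpace E] [IsTopologicalAddGroup E]
  [Module R E] {T : E →L[R] E} {φ g : E}

lemma sum_range_pow_apply_eq_sub (hφ : φ = T φ + g) (n : ℕ) :
    ∑ k ∈ Finset.range n, (T ^ k) g = φ - (T ^ n) φ := by
  have hg : g = (1 - T : E →L[R] E) φ := by
    rw [sub_apply, one_apply_eq_self, eq_sub_iff_add_eq, add_comm, ← hφ]
  rw [hg, ← sum_apply, ← mul_apply_eq_comp, geom_sum_mul_neg, sub_apply, one_apply_eq_self]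

lemma tendsto_sum_range_pow_apply (hφ : φ = T φ + g) {ψ : E}
    (hψ : Tendsto (fun n => (T ^ n) φ) atTop (𝓝 ψ)) :
    Tendsto (fun n => ∑ k ∈ Finset.range n, (T ^ k) g) atTop (𝓝 (φ - ψ)) := by
  simpa only [sum_range_pow_apply_eq_sub hφ] using tendsto_const_nhds.sub hψ

lemma eq_apply_add_of_tendsto_sum_range_pow_apply [T2Space E] {s : E}
    (hs : Tendsto (fun n => ∑ k ∈ Finset.range n, (T ^ k) g) atTop (𝓝 s)) : s = T s + g := by
  have hstep : ∀ n, ∑ k ∈ Finset.range (n + 1), (T ^ k) g =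
      T (∑ k ∈ Finset.range n, (T ^ k) g) + g := fun n => by
    rw [← sum_apply, geom_sum_succ, add_apply, mul_apply_eq_comp, sum_apply, one_apply_eq_self]
  refine tendsto_nhds_unique ((tendsto_add_atTop_iff_nat 1).2 hs) ?_
  exact ((T.continuous.tendsto s).comp hs).add_const g |>.congr fun n => (hstep n).symm

end Telescoping

lemma tendsto_pow_apply_of_dense {𝕜 E : Type*} [NontriviallyNormedField 𝕜]
    [SeminormedAddCommGroup E] [NormedSpace 𝕜 E] {T : E →L[𝕜] E} (hT : ‖T‖ ≤ 1) {Q : E → E}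
    (hQ : Continuous Q) {s : Set E} (hs : Dense s)
    (hconv : ∀ x ∈ s, Tendsto (fun n => (T ^ n) x) atTop (𝓝 (Q x))) (x : E) :
    Tendsto (fun n => (T ^ n) x) atTop (𝓝 (Q x)) := by
  have hT' : LipschitzWith 1 T := T.lipschitz.weaken (mod_cast hT)
  have hlip : ∀ n, LipschitzWith 1 ⇑(T ^ n) := fun n => by
    simpa [FunLike.coe_pow_eq_iterate] using hT'.iterate n
  have hclosed : IsClosed {x | Tendsto (fun n => (T ^ n) x) atTop (𝓝 (Q x))} :=
    (LipschitzWith.uniformEquicontinuous _ 1 hlip).equicontinuous.isClosed_setOfPred_tendsto hQ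
  exact hclosed.closure_subset_iff.2 hconv (hs x)

namespace DyadicTransfer

variable {P : Lp ℝ 1 μ01 →L[ℝ] Lp ℝ 1 μ01}
  (hP : ∀ h : Lp ℝ 1 μ01, (P h : ℝ → ℝ) =ᵐ[μ01] dyadicTransfer h)
include hP

lemma integral_apply_eq (h : Lp ℝ 1 μ01) : ∫ x, P h x ∂μ01 = ∫ x, h x ∂μ01 := by
  rw [integral_congr_ae (hP h), integral_dyadicTransfer (L1.integrable_coeFn h)]

lemma integral_pow_apply_eq (n : ℕ) (h : Lp ℝ 1 μ01) :
    ∫ x, (P ^ n) h x ∂μ01 = ∫ x, h x ∂μ01 := by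
  induction n with
  | zero => rfl
  | succ n ih => rw [pow_succ', mul_apply_eq_comp, integral_apply_eq hP, ih]

lemma opNorm_le_one : ‖P‖ ≤ 1 := by
  refine ContinuousLinearMap.opNorm_le_bound _ zero_le_one fun h => ?_
  have hh := L1.integrable_coeFn h
  rw [one_mul, L1.norm_eq_integral_norm, L1.norm_eq_integral_norm,
    ← integral_dyadicTransfer hh.norm]
  refine integral_mono_ae (L1.integrable_coeFn (P h)).norm (integrable_dyadicTransfer hh.norm) ?_
  filter_upwards [hP h] with x hx
  rw [hx]
  exact abs_dyadicTransfer_le _ x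

lemma pow_apply_ae_eq_iterate {h : Lp ℝ 1 μ01} {H : ℝ → ℝ} (hH : h =ᵐ[μ01] H) (n : ℕ) :
    (P ^ n) h =ᵐ[μ01] dyadicTransfer^[n] H := by
  induction n with
  | zero => exact hH
  | succ n ih =>
    rw [pow_succ', mul_apply_eq_comp, Function.iterate_succ_apply']
    exact (hP _).trans (dyadicTransfer_congr_ae ih)

lemma tendsto_pow_apply_of_lipschitzWith {h : Lp ℝ 1 μ01} {H : ℝ → ℝ} {K : ℝ≥0}
    (hH : h =ᵐ[μ01] H) (hK : LipschitzWith K H) :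
    Tendsto (fun n => (P ^ n) h) atTop (𝓝 (constL1 (∫ x, h x ∂μ01))) := by
  refine tendsto_iff_norm_sub_tendsto_zero.2 <| squeeze_zero (fun _ => norm_nonneg _)
    (g := fun n => (K : ℝ) / 2 ^ n) (fun n => ?_)
    (tendsto_const_nhds.div_atTop (tendsto_pow_atTop_atTop_of_one_lt one_lt_two))
  rw [← integral_pow_apply_eq hP n]
  exact_mod_cast norm_sub_constL1_integral_le (pow_apply_ae_eq_iterate hP hH n)
    (lipschitzWith_iterate_dyadicTransfer hK n)

lemma tendsto_pow_apply_constL1_integral (h : Lp ℝ 1 μ01) :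
    Tendsto (fun n => (P ^ n) h) atTop (𝓝 (constL1 (∫ x, h x ∂μ01))) := by
  -- `constL1 c` is `Lp.const 1 μ01 c` by definition
  refine tendsto_pow_apply_of_dense (opNorm_le_one hP)
    ((Lp.constL 1 μ01 ℝ).continuous.comp continuous_integral)
    (Lp.dense_hasCompactSupport_contDiff ENNReal.one_ne_top)
    (fun f ⟨H, hH, hsupp, hsmooth⟩ => ?_) h
  obtain ⟨K, hK⟩ := hsmooth.lipschitzWith_of_hasCompactSupport hsupp (by simp)
  exact tendsto_pow_apply_of_lipschitzWith hP hH hK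

end DyadicTransfer

theorem stmt0 (P : Lp ℝ 1 μ01 →L[ℝ] Lp ℝ 1 μ01)
    (hP : ∀ h : Lp ℝ 1 μ01,
      (P h : ℝ → ℝ) =ᵐ[μ01] fun x => (1 / 2) * (h : ℝ → ℝ) (x / 2) + (1 / 2) * (h : ℝ → ℝ) ((x + 1) / 2))
    (g : Lp ℝ 1 μ01) :
    ((∃ φ : Lp ℝ 1 μ01, φ = P φ + g) ↔
      ∃ s : Lp ℝ 1 μ01, Tendsto (fun m => ∑ k ∈ Finset.range (m + 1), (P ^ k) g) atTop (𝓝 s)) ∧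
    ∀ φ : Lp ℝ 1 μ01, φ = P φ + g →
      ∃ c : ℝ, Tendsto (fun m => ∑ k ∈ Finset.range (m + 1), (P ^ k) g) atTop
        (𝓝 (φ - constL1 c)) := by
  have hsum : ∀ φ, φ = P φ + g → Tendsto (fun m => ∑ k ∈ Finset.range (m + 1), (P ^ k) g) atTop
      (𝓝 (φ - constL1 (∫ x, φ x ∂μ01))) := fun φ hφ =>
    (tendsto_add_atTop_iff_nat 1).2 <| tendsto_sum_range_pow_apply hφ <|
      DyadicTransfer.tendsto_pow_apply_constL1_integral hP φ
  refine ⟨⟨fun ⟨φ, hφ⟩ => ⟨_, hsum φ hφ⟩, fun ⟨s, hs⟩ => ⟨s, ?_⟩⟩, fun φ hφ => ⟨_, hsum φ hφ⟩⟩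
  exact eq_apply_add_of_tendsto_sum_range_pow_apply ((tendsto_add_atTop_iff_nat 1).1 hs)
end

section
/- Let N ∈ ℕ and let f₁,…,f_N : [0,1] → [0,1] be functions whose images f_n([0,1]) are Lebesgue measurable, and let L be the largest m ∈ {1,…,N} such that there exist indices n₁ < n₂ < ⋯ < n_m in {1,…,N} for which the intersection f_{n₁}([0,1]) ∩ ⋯ ∩ f_{n_m}([0,1]) has positive Lebesgue measure. Then Σ_{n=1}^N ∫_{f_n([0,1])} |h(y)| dy ≤ L · ∫_{[0,1]} |h(y)| dy for every h ∈ L¹([0,1]). -/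
open MeasureTheory Filter Set Topology

theorem stmt7 (N : ℕ) (f : Fin N → ℝ → ℝ)
    (hmaps : ∀ n, MapsTo (f n) (Icc 0 1) (Icc 0 1))
    (hmeas : ∀ n, MeasurableSet (f n '' Icc 0 1))
    (L : ℕ)
    (hL : IsGreatest {m : ℕ | 1 ≤ m ∧ m ≤ N ∧
      ∃ s : Finset (Fin N), s.card = m ∧
        0 < MeasureTheory.volume (⋂ n ∈ s, f n '' Icc (0 : ℝ) 1)} L)
    (h : ℝ → ℝ) (hh : IntegrableOn h (Icc 0 1)) :
    ∑ n : Fin N, ∫ y in f n '' Icc (0 : ℝ) 1, |h y| ≤ (L : ℝ) * ∫ y in Icc (0 : ℝ) 1, |h y| := by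
  classical
  set A : Fin N → Set ℝ := fun n => f n '' Icc 0 1 with hAdef
  have hsub : ∀ n, A n ⊆ Icc (0:ℝ) 1 := fun n => (hmaps n).image_subset
  have habs : IntegrableOn (fun y => |h y|) (Icc (0:ℝ) 1) := hh.abs
  have hind : ∀ n : Fin N,
      IntegrableOn (fun y => (A n).indicator (fun y => |h y|) y) (Icc (0:ℝ) 1) :=
    fun n => habs.indicator (hmeas n)
  have hL1 : 1 ≤ L := hL.1.1
  -- the set of points covered L+1 times is null
  have hZ : volume (⋃ s ∈ {s : Finset (Fin N) | s.card = L + 1}, ⋂ n ∈ s, A n) = 0 := by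
    rw [measure_biUnion_null_iff (Set.to_countable _)]
    intro s hs
    by_contra hpos
    have hpos' : 0 < volume (⋂ n ∈ s, A n) := pos_iff_ne_zero.mpr hpos
    have hs' : s.card = L + 1 := hs
    have hcard : s.card ≤ N := by
      have := Finset.card_le_univ s
      simpa using this
    have hmem : L + 1 ∈ {m : ℕ | 1 ≤ m ∧ m ≤ N ∧
        ∃ s : Finset (Fin N), s.card = m ∧
          0 < MeasureTheory.volume (⋂ n ∈ s, f n '' Icc (0 : ℝ) 1)} := by
      refine ⟨by omega, by omega, s, hs, hpos'⟩
    have := hL.2 hmem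
    omega
  have hae : ∀ᵐ y : ℝ,
      ((Finset.univ.filter (fun n => y ∈ A n)).card : ℝ) ≤ (L : ℝ) := by
    have : ∀ᵐ y : ℝ, y ∉ ⋃ s ∈ {s : Finset (Fin N) | s.card = L + 1}, ⋂ n ∈ s, A n :=
      measure_eq_zero_iff_ae_notMem.mp hZ
    filter_upwards [this] with y hy
    by_contra hgt
    push_neg at hgt
    have hgt' : L + 1 ≤ (Finset.univ.filter (fun n => y ∈ A n)).card := by
      exact_mod_cast Nat.succ_le_of_lt (by exact_mod_cast hgt)
    obtain ⟨t, hts, htc⟩ := Finset.exists_subset_card_eq hgt'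
    apply hy
    refine mem_biUnion htc ?_
    refine mem_iInter₂.mpr fun n hn => ?_
    have := hts hn
    simpa using this
  -- pointwise identity and bound
  have hpt : ∀ᵐ y : ℝ,
      (∑ n : Fin N, (A n).indicator (fun y => |h y|) y) ≤ (L : ℝ) * |h y| := by
    filter_upwards [hae] with y hy
    have hsum : (∑ n : Fin N, (A n).indicator (fun y => |h y|) y)
        = ((Finset.univ.filter (fun n => y ∈ A n)).card : ℝ) * |h y| := by
      rw [Finset.sum_congr rfl (fun n _ => Set.indicator_apply (A n) _ y)]
      rw [← Finset.sum_filter, Finset.sum_const, nsmul_eq_mul]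
    rw [hsum]
    exact mul_le_mul_of_nonneg_right hy (abs_nonneg _)
  calc ∑ n : Fin N, ∫ y in A n, |h y|
      = ∑ n : Fin N, ∫ y in Icc (0:ℝ) 1, (A n).indicator (fun y => |h y|) y := by
        refine Finset.sum_congr rfl fun n _ => ?_
        rw [setIntegral_indicator (hmeas n), inter_eq_self_of_subset_right (hsub n)]
    _ = ∫ y in Icc (0:ℝ) 1, ∑ n : Fin N, (A n).indicator (fun y => |h y|) y :=
        (integral_finset_sum _ fun n _ => hind n).symm
    _ ≤ ∫ y in Icc (0:ℝ) 1, (L : ℝ) * |h y| := by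
        refine integral_mono_ae (integrable_finset_sum _ fun n _ => hind n)
          (habs.const_mul _) ?_
        exact ae_restrict_of_ae hpt
    _ = (L : ℝ) * ∫ y in Icc (0:ℝ) 1, |h y| := MeasureTheory.integral_const_mul _ _
end

section
/- Let N ∈ ℕ, let f₁,…,f_N : [0,1] → [0,1] and g₁,…,g_N : [0,1] → ℝ be Lebesgue measurable functions satisfying: (H₁) every f_n is approximately differentiable almost everywhere and satisfies Luzin's condition N; (H₂) there exists K ∈ ℕ such that for every n the set {x ∈ [0,1] : card f_n^{-1}(x) > K} has Lebesgue measure zero; (H₃) f_n^{-1}(A) has Lebesgue measure zero for every n and every Lebesgue-null set A ⊆ ℝ. Let L be the largest m ∈ {1,…,N} such that some intersection f_{n₁}([0,1]) ∩ ⋯ ∩ f_{n_m}([0,1]) with n₁ < ⋯ < n_m has positive Lebesgue measure. If there exists a real constant C such that |g_n(x)| ≤ (C/(KL)) |f_n'(x)| for all n ∈ {1,…,N} and almost all x ∈ [0,1], then the formula Ph = Σ_{n=1}^N g_n·(h∘f_n) defines a linear operator P : L¹([0,1]) → L¹([0,1]) (independent of the choice of representative of h), which is continuous and satisfies ‖P‖_*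 ≤ C. -/
open MeasureTheory Filter Set Topology
open scoped Classical

/-- `x` is a Lebesgue density point of the set `S ⊆ ℝ`. -/
def DensityPt (S : Set ℝ) (x : ℝ) : Prop :=
  Tendsto (fun r : ℝ =>
      MeasureTheory.volume (S ∩ Metric.closedBall x r) / MeasureTheory.volume (Metric.closedBall x r))
    (𝓝[>] 0) (𝓝 1)

/-- `h` has the linear map `t ↦ a * t` as approximate differential at `x₀` (relative to `E`). -/
def HasApproxDerivAt (E : Set ℝ) (h : ℝ → ℝ) (a : ℝ) (x₀ : ℝ) : Prop :=
  ∀ ε > 0, DensityPt {x | x ∈ E ∧ x ≠ x₀ ∧ |h x - h x₀ - a * (x - x₀)| / |x - x₀| < ε} x₀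

noncomputable def approxDeriv (E : Set ℝ) (h : ℝ → ℝ) (x : ℝ) : ℝ :=
  if hd : ∃ a, HasApproxDerivAt E h a x then hd.choose else 0

/-!
Up to a null set, `[0,1]` splits into countably many disjoint measurable pieces on each of which
`fₙ` agrees with a Lipschitz function: at a point of approximate differentiability the points of
bounded difference quotient have density one, and dense subsets of two nearby balls meet. Hence
`fₙ` is differentiable relative to each piece, with derivative equal to `fₙ'` a.e., and the pieces
where `fₙ' ≠ 0` refine into pieces on which `fₙ` is injective. Change of variables on these bounds
`∫ |fₙ'| · W ∘ fₙ` by `∫ #(pieces above y) · W(y) dy ≤ K ∫_{fₙ[0,1]} W`; since almost no point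
lies in `L + 1` of the images `fₙ[0,1]`, summing over `n` costs a factor `L`, and `W = |h|` gives
`‖Ph‖₁ ≤ C ‖h‖₁`. Condition (H₃) makes `Ph` independent of the representative of `h`. Luzin's
condition N turns `fₙ' = 0` a.e. into `|fₙ[0,1]| = 0`, which with the definition of `L` excludes
`C < 0` and `K = 0` (where `C / (K L)` would be the junk value `0`).
-/

open scoped ENNReal NNReal Function
open Metric

namespace DensityPt

variable {S T : Set ℝ} {x : ℝ}

theorem of_eventually_le (h : DensityPt S x)
    (hle : ∀ᶠ r in 𝓝[>] 0, volume (S ∩ closedBall x r) ≤ volume (T ∩ closedBall x r)) :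
    DensityPt T x := by
  refine tendsto_of_tendsto_of_tendsto_of_le_of_le' h tendsto_const_nhds ?_
    (Eventually.of_forall fun r => ?_)
  · filter_upwards [hle] with r hr using ENNReal.div_le_div_right hr _
  · exact ENNReal.div_le_of_le_mul (by rw [one_mul]; exact measure_mono inter_subset_right)

theorem mono (h : DensityPt S x) (hST : S ⊆ T) : DensityPt T x :=
  h.of_eventually_le <| .of_forall fun _ => measure_mono (inter_subset_inter_left _ hST)

theorem eventually_mul_volume_le (h : DensityPt S x) {c : ℝ≥0∞} (hc : c < 1) :
    ∀ᶠ r in 𝓝[>] 0, c * volume (closedBall x r) ≤ volume (S ∩ closedBall x r) := by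
  filter_upwards [h.eventually (lt_mem_nhds hc), self_mem_nhdsWithin] with r hr hr0
  calc c * volume (closedBall x r)
      ≤ volume (S ∩ closedBall x r) / volume (closedBall x r) * volume (closedBall x r) := by
        gcongr
    _ = volume (S ∩ closedBall x r) :=
        ENNReal.div_mul_cancel (measure_closedBall_pos volume x hr0).ne'
          measure_closedBall_lt_top.ne

theorem inter_nonempty (hS : DensityPt S x) (hT : DensityPt T x) (hTm : MeasurableSet T) :
    (S ∩ T).Nonempty := by
  have hc : ENNReal.ofReal (3 / 4) < 1 := by norm_num
  obtain ⟨r, ⟨hSr, hTr⟩, hr⟩ :=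
    ((hS.eventually_mul_volume_le hc).and (hT.eventually_mul_volume_le hc)
      |>.and self_mem_nhdsWithin).exists
  have hvol : volume (closedBall x r) <
      ENNReal.ofReal (3 / 4) * volume (closedBall x r) +
        ENNReal.ofReal (3 / 4) * volume (closedBall x r) := by
    rw [Real.volume_closedBall, ← ENNReal.ofReal_mul (by norm_num), ← ENNReal.ofReal_add
      (by positivity) (by positivity), ENNReal.ofReal_lt_ofReal_iff (by positivity)]
    linarith
  obtain ⟨y, ⟨hyS, -⟩, hyT, -⟩ := nonempty_inter_of_measure_lt_add volume
    (hTm.inter measurableSet_closedBall) inter_subset_right inter_subset_right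
    (hvol.trans_le (add_le_add hSr hTr))
  exact ⟨y, hyS, hyT⟩

end DensityPt

theorem ae_densityPt (S : Set ℝ) : ∀ᵐ x ∂volume.restrict S, DensityPt S x :=
  Besicovitch.ae_tendsto_measure_inter_div volume S

section ApproxDeriv

variable {E : Set ℝ} {f G : ℝ → ℝ} {a b x : ℝ}

theorem measurableSet_approxDerivSet (hE : MeasurableSet E) (hf : Measurable f) (a x ε : ℝ) :
    MeasurableSet {y | y ∈ E ∧ y ≠ x ∧ |f y - f x - a * (y - x)| / |y - x| < ε} :=
  hE.inter <| (measurableSet_singleton x).compl.inter <| measurableSet_lt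
    (by fun_prop : Measurable fun y => |f y - f x - a * (y - x)| / |y - x|) measurable_const

theorem HasApproxDerivAt.unique (hE : MeasurableSet E) (hf : Measurable f)
    (ha : HasApproxDerivAt E f a x) (hb : HasApproxDerivAt E f b x) : a = b := by
  by_contra hne
  have hε : 0 < |a - b| / 2 := by have := abs_pos.2 (sub_ne_zero.2 hne); positivity
  obtain ⟨y, ⟨-, hyx, hya⟩, ⟨-, -, hyb⟩⟩ :=
    (ha _ hε).inter_nonempty (hb _ hε) (measurableSet_approxDerivSet hE hf b x _)
  have hd : 0 < |y - x| := abs_pos.2 (sub_ne_zero.2 hyx)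
  rw [div_lt_iff₀ hd] at hya hyb
  have : |a - b| * |y - x| ≤ |f y - f x - b * (y - x)| + |f y - f x - a * (y - x)| := by
    rw [← abs_mul]
    calc |(a - b) * (y - x)| = |(f y - f x - b * (y - x)) - (f y - f x - a * (y - x))| := by
          ring_nf
      _ ≤ _ := abs_sub _ _
  linarith

theorem HasApproxDerivAt.approxDeriv_eq (hE : MeasurableSet E) (hf : Measurable f)
    (ha : HasApproxDerivAt E f a x) : approxDeriv E f x = a := by
  have hex : ∃ b, HasApproxDerivAt E f b x := ⟨a, ha⟩
  rw [approxDeriv, dif_pos hex]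
  exact hex.choose_spec.unique hE hf ha

theorem HasDerivAt.hasApproxDerivAt_of_eqOn {B : Set ℝ} (hG : HasDerivAt G b x) (hBE : B ⊆ E)
    (hfG : EqOn f G B) (hxB : x ∈ B) (hdens : DensityPt B x) : HasApproxDerivAt E f b x := by
  intro ε hε
  obtain ⟨δ, hδ, hG_approx⟩ :=
    Metric.eventually_nhds_iff.1 ((hasDerivAt_iff_isLittleO.1 hG).def (half_pos hε))
  refine hdens.of_eventually_le ?_
  filter_upwards [Ioo_mem_nhdsGT hδ] with r hr
  rw [← measure_sdiff_null (measure_singleton x)]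
  refine measure_mono fun y ⟨⟨hyB, hyr⟩, (hyx : y ≠ x)⟩ => ⟨⟨hBE hyB, hyx, ?_⟩, hyr⟩
  have hd : 0 < |y - x| := abs_pos.2 (sub_ne_zero.2 hyx)
  have hy := hG_approx (lt_of_le_of_lt (mem_closedBall.1 hyr) hr.2)
  rw [Real.norm_eq_abs, Real.norm_eq_abs, smul_eq_mul] at hy
  rw [div_lt_iff₀ hd, hfG hyB, hfG hxB, mul_comm b]
  linarith [mul_lt_mul_of_pos_right (half_lt_self hε) hd]

theorem approxDeriv_ae_eq_of_eqOn (hE : MeasurableSet E) (hf : Measurable f) {B : Set ℝ}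
    (hB : MeasurableSet B) {φ : ℝ → ℝ} (hBE : B ⊆ E) (hfG : EqOn f G B)
    (hG : ∀ x ∈ B, HasDerivAt G (φ x) x) :
    ∀ᵐ x ∂volume.restrict B, approxDeriv E f x = φ x := by
  filter_upwards [ae_restrict_mem hB, ae_densityPt B] with x hxB hdens
  exact ((hG x hxB).hasApproxDerivAt_of_eqOn hBE hfG hxB hdens).approxDeriv_eq hE hf

end ApproxDeriv

section LipschitzCover

variable {f : ℝ → ℝ}

def boundedSlopeSet (f : ℝ → ℝ) (M : ℝ≥0) (x : ℝ) : Set ℝ :=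
  {y | |f y - f x| ≤ M * |y - x|}

def denseBoundedSlopeSet (f : ℝ → ℝ) (M : ℝ≥0) (δ : ℝ) : Set ℝ :=
  {x | ∀ r ∈ Ioc 0 δ, ENNReal.ofReal (7 / 8) * volume (closedBall x r) ≤
    volume (boundedSlopeSet f M x ∩ closedBall x r)}

theorem measurableSet_boundedSlopeSet (hf : Measurable f) (M : ℝ≥0) (x : ℝ) :
    MeasurableSet (boundedSlopeSet f M x) :=
  measurableSet_le (by fun_prop) (by fun_prop)

/-- Two `7/8`-dense sets in the balls of radius `|x - z|` around `x` and `z` must meet, since both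
balls lie in a ball of radius `3|x - z|/2`. -/
theorem abs_sub_le_of_mem_denseBoundedSlopeSet (hf : Measurable f) {M : ℝ≥0} {δ x z : ℝ}
    (hx : x ∈ denseBoundedSlopeSet f M δ) (hz : z ∈ denseBoundedSlopeSet f M δ)
    (hxz : |x - z| ≤ δ) : |f x - f z| ≤ 2 * M * |x - z| := by
  rcases eq_or_ne x z with rfl | hne
  · simp
  set r := |x - z|
  have hr : 0 < r := abs_pos.2 (sub_ne_zero.2 hne)
  have hball : ∀ w ∈ ({x, z} : Set ℝ), closedBall w r ⊆ closedBall ((x + z) / 2) (3 / 2 * r) := by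
    refine fun w hw => closedBall_subset_closedBall' ?_
    rcases hw with rfl | rfl <;> rw [Real.dist_eq]
    · rw [show w - (w + z) / 2 = (w - z) / 2 by ring, abs_div, abs_two]; linarith
    · rw [show w - (x + w) / 2 = -((x - w) / 2) by ring, abs_neg, abs_div, abs_two]; linarith
  have hvol : volume (closedBall ((x + z) / 2) (3 / 2 * r)) <
      ENNReal.ofReal (7 / 8) * volume (closedBall x r) +
        ENNReal.ofReal (7 / 8) * volume (closedBall z r) := by
    simp only [Real.volume_closedBall]
    rw [← ENNReal.ofReal_mul (by norm_num), ← ENNReal.ofReal_add (by positivity) (by positivity),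
      ENNReal.ofReal_lt_ofReal_iff (by positivity)]
    linarith
  obtain ⟨y, ⟨hyx, hyxr⟩, ⟨hyz, hyzr⟩⟩ := nonempty_inter_of_measure_lt_add volume
    ((measurableSet_boundedSlopeSet hf M z).inter measurableSet_closedBall)
    (inter_subset_right.trans (hball x (by simp))) (inter_subset_right.trans (hball z (by simp)))
    (hvol.trans_le (add_le_add (hx r ⟨hr, hxz⟩) (hz r ⟨hr, hxz⟩)))
  rw [mem_closedBall, Real.dist_eq] at hyxr hyzr
  calc |f x - f z| ≤ |f y - f x| + |f y - f z| := by
        rw [abs_sub_comm (f y)]; exact abs_sub_le _ _ _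
    _ ≤ M * |y - x| + M * |y - z| := add_le_add hyx hyz
    _ ≤ 2 * M * r := by nlinarith [M.2]

theorem lipschitzOnWith_denseBoundedSlopeSet (hf : Measurable f) (M : ℝ≥0) (δ a : ℝ) :
    LipschitzOnWith (2 * M) f (denseBoundedSlopeSet f M δ ∩ Icc a (a + δ)) := by
  refine LipschitzOnWith.of_dist_le_mul fun x hx z hz => ?_
  rw [Real.dist_eq, Real.dist_eq, NNReal.coe_mul, NNReal.coe_two]
  exact abs_sub_le_of_mem_denseBoundedSlopeSet hf hx.1 hz.1
    (abs_sub_le_iff.2 ⟨by linarith [hx.2.2, hz.2.1], by linarith [hx.2.1, hz.2.2]⟩)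

theorem HasApproxDerivAt.exists_mem_denseBoundedSlopeSet {E : Set ℝ} {a x : ℝ}
    (ha : HasApproxDerivAt E f a x) : ∃ m k : ℕ, x ∈ denseBoundedSlopeSet f m (k + 1)⁻¹ := by
  obtain ⟨m, hm⟩ := exists_nat_ge (|a| + 1)
  have hdens : DensityPt (boundedSlopeSet f m x) x := by
    refine (ha 1 one_pos).mono fun y ⟨_, hyx, hy⟩ => ?_
    have hd : 0 < |y - x| := abs_pos.2 (sub_ne_zero.2 hyx)
    rw [div_lt_iff₀ hd, one_mul] at hy
    have := abs_add_le (f y - f x - a * (y - x)) (a * (y - x))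
    rw [sub_add_cancel, abs_mul] at this
    change |f y - f x| ≤ (m : ℝ) * |y - x|
    nlinarith
  obtain ⟨δ, hδ, hsub⟩ := mem_nhdsGT_iff_exists_Ioo_subset.1
    (hdens.eventually_mul_volume_le (c := ENNReal.ofReal (7 / 8)) (by norm_num))
  obtain ⟨k, hk⟩ := exists_nat_one_div_lt (mem_Ioi.1 hδ)
  refine ⟨m, k, fun r hr => hsub ⟨hr.1, hr.2.trans_lt ?_⟩⟩
  simpa using hk

theorem exists_lipschitz_cover (hf : Measurable f) (E : Set ℝ) :
    ∃ G : ℕ → ℝ → ℝ, (∀ p, ∃ K, LipschitzWith K (G p)) ∧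
      ∀ x a, HasApproxDerivAt E f a x → ∃ p, f x = G p x := by
  let δ : ℕ → ℝ := fun k => ((k : ℝ) + 1)⁻¹
  have hext : ∀ σ : ℕ × ℕ × ℤ, ∃ G : ℝ → ℝ, LipschitzWith (2 * σ.1) G ∧
      EqOn f G (denseBoundedSlopeSet f σ.1 (δ σ.2.1) ∩
        Icc (σ.2.2 * δ σ.2.1) (σ.2.2 * δ σ.2.1 + δ σ.2.1)) :=
    fun σ => (lipschitzOnWith_denseBoundedSlopeSet hf _ _ _).extend_real
  choose G hGlip hGeq using hext
  obtain ⟨e, he⟩ := exists_surjective_nat (ℕ × ℕ × ℤ)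
  refine ⟨fun p => G (e p), fun p => ⟨_, hGlip (e p)⟩, fun x a ha => ?_⟩
  obtain ⟨m, k, hmk⟩ := ha.exists_mem_denseBoundedSlopeSet
  obtain ⟨p, hp⟩ := he (m, k, ⌊x * (k + 1)⌋)
  have hk : (0 : ℝ) < k + 1 := by positivity
  refine ⟨p, hGeq _ (hp ▸ ⟨hmk, ?_, ?_⟩)⟩
  · rw [← div_eq_mul_inv, div_le_iff₀ hk]
    exact Int.floor_le _
  · rw [← add_one_mul, ← div_eq_mul_inv, le_div_iff₀ hk]
    exact (Int.lt_floor_add_one _).le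

end LipschitzCover

theorem exists_hasDerivWithinAt_pieces {E : Set ℝ} (hE : MeasurableSet E) {f : ℝ → ℝ}
    (hf : Measurable f) (hdiff : volume {x ∈ E | ¬∃ a, HasApproxDerivAt E f a x} = 0) :
    ∃ (D : ℕ → Set ℝ) (φ : ℕ → ℝ → ℝ), (∀ p, MeasurableSet (D p)) ∧ Pairwise (Disjoint on D) ∧
      (∀ p, D p ⊆ E) ∧ volume (E \ ⋃ p, D p) = 0 ∧ (∀ p, Measurable (φ p)) ∧
      (∀ p, ∀ x ∈ D p, HasDerivWithinAt f (φ p x) (D p) x) ∧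
      ∀ p, ∀ᵐ x ∂volume.restrict (D p), approxDeriv E f x = φ p x := by
  obtain ⟨G, hGlip, hcover⟩ := exists_lipschitz_cover hf E
  set D' : ℕ → Set ℝ := fun p => {x | x ∈ E ∧ f x = G p x ∧ DifferentiableAt ℝ (G p) x}
  have hD'meas : ∀ p, MeasurableSet (D' p) := fun p =>
    hE.inter ((measurableSet_eq_fun hf (hGlip p).choose_spec.continuous.measurable).inter
      (measurableSet_of_differentiableAt ℝ (G p)))
  have hDD' : ∀ p, disjointed D' p ⊆ D' p := disjointed_subset D'
  refine ⟨disjointed D', fun p => deriv (G p), MeasurableSet.disjointed hD'meas,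
    disjoint_disjointed D', fun p => (hDD' p).trans fun x hx => hx.1, ?_,
    fun p => measurable_deriv (G p), fun p x hx => ?_, fun p => ?_⟩
  · rw [iUnion_disjointed]
    refine measure_mono_null (t := {x | x ∈ E ∧ ¬∃ a, HasApproxDerivAt E f a x} ∪
      ⋃ p, {x | ¬DifferentiableAt ℝ (G p) x}) ?_ <| measure_union_null hdiff <|
        measure_iUnion_null fun p => ae_iff.1 (hGlip p).choose_spec.ae_differentiableAt
    rintro x ⟨hxE, hxD⟩
    by_cases hx : ∃ a, HasApproxDerivAt E f a x
    · obtain ⟨a, ha⟩ := hx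
      obtain ⟨p, hp⟩ := hcover x a ha
      exact Or.inr (mem_iUnion.2 ⟨p, fun hd => hxD (mem_iUnion.2 ⟨p, hxE, hp, hd⟩)⟩)
    · exact Or.inl ⟨hxE, hx⟩
  · exact (hDD' p hx).2.2.hasDerivAt.hasDerivWithinAt.congr (fun y hy => (hDD' p hy).2.1)
      (hDD' p hx).2.1
  · exact approxDeriv_ae_eq_of_eqOn hE hf (MeasurableSet.disjointed hD'meas p)
      ((hDD' p).trans fun x hx => hx.1) (fun y hy => (hDD' p hy).2.1)
      fun x hx => (hDD' p hx).2.2.hasDerivAt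

/-- On each piece, `f` is within `|f' y| / 2` of the linear map `t ↦ f' y * t` for some `y`, which
forces injectivity. -/
theorem exists_injOn_partition {f f' : ℝ → ℝ} {s : Set ℝ} (hs : MeasurableSet s)
    (hf : ∀ x ∈ s, HasDerivWithinAt f (f' x) s x) (h0 : ∀ x ∈ s, f' x ≠ 0) :
    ∃ t : ℕ → Set ℝ, Pairwise (Disjoint on t) ∧ (∀ n, MeasurableSet (t n)) ∧
      (∀ n, t n ⊆ s) ∧ s ⊆ ⋃ n, t n ∧ ∀ n, InjOn f (t n) := by
  obtain ⟨t, A, hdisj, htmeas, hcover, happrox, hA⟩ :=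
    exists_partition_approximatesLinearOn_of_hasFDerivWithinAt f s
      (fun x => (1 : ℝ →L[ℝ] ℝ).smulRight (f' x)) (fun x hx => (hf x hx).hasFDerivWithinAt)
      (fun A => if A = 0 then 1 else ‖A‖₊ / 2) fun A => by
        split_ifs with h
        · exact one_ne_zero
        · simpa using h
  refine ⟨fun n => s ∩ t n, fun m n hmn => (hdisj hmn).mono inter_subset_right inter_subset_right,
    fun n => hs.inter (htmeas n), fun n => inter_subset_left, fun x hx => ?_,
    fun n x hx z hz hxz => ?_⟩
  · obtain ⟨n, hn⟩ := mem_iUnion.1 (hcover hx)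
    exact mem_iUnion.2 ⟨n, hx, hn⟩
  obtain ⟨y, hy, hAy⟩ := hA ⟨x, hx.1⟩ n
  have hfy : f' y ≠ 0 := h0 y hy
  have hAn : A n ≠ 0 := by
    rw [hAy]; intro h; exact hfy (by simpa using congrArg (· 1) h)
  have happ := happrox n x hx z hz
  rw [if_neg hAn, hAy, hxz, sub_self] at happ
  simp only [zero_sub, norm_neg, ContinuousLinearMap.smulRight_apply, one_apply_eq_self,
    smul_eq_mul, norm_mul, Real.norm_eq_abs, ContinuousLinearMap.norm_smulRight_apply, norm_one,
    one_mul, NNReal.coe_div, coe_nnnorm, NNReal.coe_ofNat] at happ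
  have hpos : 0 < |f' y| := abs_pos.2 hfy
  have : |x - z| = 0 := by nlinarith [abs_nonneg (x - z)]
  exact sub_eq_zero.1 (abs_eq_zero.1 this)

theorem exists_injOn_pieces {E : Set ℝ} (hE : MeasurableSet E) {f : ℝ → ℝ}
    (hf : Measurable f) (hdiff : volume {x ∈ E | ¬∃ a, HasApproxDerivAt E f a x} = 0) :
    ∃ (T : ℕ × ℕ → Set ℝ) (φ : ℕ × ℕ → ℝ → ℝ), (∀ i, MeasurableSet (T i)) ∧
      Pairwise (Disjoint on T) ∧ (∀ i, T i ⊆ E) ∧ (∀ i, InjOn f (T i)) ∧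
      (∀ i, ∀ x ∈ T i, HasDerivWithinAt f (φ i x) (T i) x) ∧
      (∀ i, ∀ᵐ x ∂volume.restrict (T i), approxDeriv E f x = φ i x) ∧
      ∀ᵐ x ∂volume.restrict E, x ∉ ⋃ i, T i → approxDeriv E f x = 0 := by
  obtain ⟨D, φ, hDmeas, hDdisj, hDE, hDnull, hφmeas, hφ, hφae⟩ :=
    exists_hasDerivWithinAt_pieces hE hf hdiff
  have hsmeas : ∀ p, MeasurableSet (D p ∩ {x | φ p x ≠ 0}) := fun p =>
    (hDmeas p).inter (measurableSet_eq_fun (hφmeas p) measurable_const).compl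
  choose t htdisj htmeas hts hcover htinj using fun p =>
    exists_injOn_partition (hsmeas p) (fun x hx => (hφ p x hx.1).mono inter_subset_left)
      fun x hx => hx.2
  have htD : ∀ p n, t p n ⊆ D p := fun p n => (hts p n).trans inter_subset_left
  refine ⟨fun i => t i.1 i.2, fun i => φ i.1, fun i => htmeas i.1 i.2, ?_,
    fun i => (htD i.1 i.2).trans (hDE i.1), fun i => htinj i.1 i.2,
    fun i x hx => (hφ i.1 x (htD i.1 i.2 hx)).mono (htD i.1 i.2),
    fun i => ae_restrict_of_ae_restrict_of_subset (htD i.1 i.2) (hφae i.1), ?_⟩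
  · rintro ⟨p, n⟩ ⟨q, m⟩ hne
    rcases eq_or_ne p q with rfl | hpq
    · exact htdisj p fun hnm => hne (congrArg _ hnm)
    · exact (hDdisj hpq).mono (htD p n) (htD q m)
  have hmemD : ∀ᵐ x ∂volume.restrict E, x ∈ ⋃ p, D p := by
    rw [ae_restrict_iff' hE]
    exact (measure_eq_zero_iff_ae_notMem.1 hDnull).mono fun x hx hxE =>
      not_not.1 fun h => hx ⟨hxE, h⟩
  have hφE : ∀ᵐ x ∂volume.restrict E, ∀ p, x ∈ D p → approxDeriv E f x = φ p x :=
    ae_all_iff.2 fun p => ae_restrict_of_ae ((ae_restrict_iff' (hDmeas p)).1 (hφae p))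
  filter_upwards [hmemD, hφE] with x hxD hxφ hxT
  obtain ⟨p, hp⟩ := mem_iUnion.1 hxD
  rw [hxφ p hp]
  by_contra hne
  obtain ⟨n, hn⟩ := mem_iUnion.1 (hcover p ⟨hp, hne⟩)
  exact hxT (mem_iUnion.2 ⟨(p, n), hn⟩)

section Multiplicity

variable {α ι : Type*}

theorem tsum_indicator_one_eq_encard (U : ι → Set α) (y : α) :
    ∑' i, (U i).indicator (1 : α → ℝ≥0∞) y = ({i | y ∈ U i}.encard : ℝ≥0∞) := by
  rw [← ENNReal.tsum_set_one, tsum_subtype {i | y ∈ U i} fun _ => (1 : ℝ≥0∞)]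
  congr with i

theorem encard_setOf_mem_image_le {β : Type*} {T : ι → Set α} (hT : Pairwise (Disjoint on T))
    (f : α → β) (y : β) : {i | y ∈ f '' T i}.encard ≤ ((⋃ i, T i) ∩ f ⁻¹' {y}).encard := by
  rcases eq_empty_or_nonempty {i | y ∈ f '' T i} with h | ⟨-, x, -, -⟩
  · rw [h, encard_empty]; exact zero_le
  have : Nonempty α := ⟨x⟩
  choose! ψ hψT hψf using fun i (hi : y ∈ f '' T i) => hi
  refine encard_le_encard_of_injOn (fun i hi => ⟨mem_iUnion_of_mem i (hψT i hi), hψf i hi⟩)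
    fun i hi j hj hij => ?_
  by_contra hne
  exact (hT hne).ne_of_mem (hψT i hi) (hψT j hj) hij

theorem tsum_setLIntegral_le_of_encard_le [MeasurableSpace α] [Countable ι] {μ : Measure α}
    {U : ι → Set α} (hU : ∀ i, MeasurableSet (U i)) {W : α → ℝ≥0∞} (hW : Measurable W) {M : ℝ≥0∞}
    (hM : ∀ᵐ y ∂μ, ({i | y ∈ U i}.encard : ℝ≥0∞) ≤ M) :
    ∑' i, ∫⁻ y in U i, W y ∂μ ≤ M * ∫⁻ y in ⋃ i, U i, W y ∂μ := by
  have hUnion := MeasurableSet.iUnion hU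
  calc ∑' i, ∫⁻ y in U i, W y ∂μ = ∫⁻ y, ({i | y ∈ U i}.encard : ℝ≥0∞) * W y ∂μ := by
        simp_rw [← lintegral_indicator (hU _), ← tsum_indicator_one_eq_encard,
          ← ENNReal.tsum_mul_right]
        rw [← lintegral_tsum fun i => (hW.indicator (hU i)).aemeasurable]
        congr with y
        congr with i
        by_cases h : y ∈ U i <;> simp [h]
    _ ≤ ∫⁻ y, M * (⋃ i, U i).indicator W y ∂μ := by
        refine lintegral_mono_ae (hM.mono fun y hy => ?_)
        by_cases h : y ∈ ⋃ i, U i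
        · rw [indicator_of_mem h]; gcongr
        · have : {i | y ∈ U i} = ∅ :=
            eq_empty_of_forall_notMem fun i hi => h (mem_iUnion_of_mem i hi)
          simp [this]
    _ = M * ∫⁻ y in ⋃ i, U i, W y ∂μ := by
        rw [lintegral_const_mul _ (hW.indicator hUnion), lintegral_indicator hUnion]

theorem sum_setLIntegral_le_of_inter_null [MeasurableSpace α] [Fintype ι]
    {μ : Measure α} {U : ι → Set α} (hU : ∀ i, MeasurableSet (U i)) {L : ℕ}
    (hL : ∀ s : Finset ι, s.card = L + 1 → μ (⋂ i ∈ s, U i) = 0) {W : α → ℝ≥0∞}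
    (hW : Measurable W) : ∑ i, ∫⁻ y in U i, W y ∂μ ≤ L * ∫⁻ y in ⋃ i, U i, W y ∂μ := by
  rw [← tsum_fintype (L := .unconditional _)]
  refine tsum_setLIntegral_le_of_encard_le hU hW ?_
  have hnull : μ (⋃ (s : Finset ι) (_ : s.card = L + 1), ⋂ i ∈ s, U i) = 0 :=
    measure_iUnion_null fun s => measure_iUnion_null fun hs => hL s hs
  filter_upwards [measure_eq_zero_iff_ae_notMem.1 hnull] with y hy
  have hcard : {i | y ∈ U i}.encard = (Finset.univ.filter fun i => y ∈ U i).card := by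
    rw [← encard_coe_eq_coe_finsetCard, Finset.coe_filter]; simp
  rw [hcard, ENat.toENNReal_coe, Nat.cast_le]
  by_contra! hlt
  obtain ⟨s, hs, hscard⟩ := Finset.exists_subset_card_eq (Nat.succ_le_of_lt hlt)
  exact hy (mem_iUnion₂.2 ⟨s, hscard, mem_iInter₂.2 fun i hi => (Finset.mem_filter.1 (hs hi)).2⟩)

end Multiplicity

section ChangeOfVariables

variable {E : Set ℝ} {f : ℝ → ℝ}

theorem exists_lintegral_approxDeriv_mul_le (hE : MeasurableSet E) (hf : Measurable f)
    (hdiff : volume {x ∈ E | ¬∃ a, HasApproxDerivAt E f a x} = 0) {K : ℕ}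
    (hK : ∀ᵐ y, (E ∩ f ⁻¹' {y}).encard ≤ K) :
    ∃ U ⊆ f '' E, MeasurableSet U ∧ ∀ W : ℝ → ℝ≥0∞, Measurable W →
      ∫⁻ x in E, ‖approxDeriv E f x‖ₑ * W (f x) ≤ K * ∫⁻ y in U, W y := by
  obtain ⟨T, φ, hTmeas, hTdisj, hTE, hTinj, hφ, hφae, hzero⟩ := exists_injOn_pieces hE hf hdiff
  have hfTmeas : ∀ i, MeasurableSet (f '' T i) := fun i => (hTmeas i).image_of_continuousOn_injOn
    (fun x hx => (hφ i x hx).continuousWithinAt) (hTinj i)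
  refine ⟨⋃ i, f '' T i, iUnion_subset fun i => image_mono (hTE i), .iUnion hfTmeas,
    fun W hW => ?_⟩
  set F : ℝ → ℝ≥0∞ := fun x => ‖approxDeriv E f x‖ₑ * W (f x)
  have hTUnion := MeasurableSet.iUnion hTmeas
  calc ∫⁻ x in E, F x ≤ ∫⁻ x in E, (⋃ i, T i).indicator F x := by
        refine lintegral_mono_ae (hzero.mono fun x hx => ?_)
        by_cases h : x ∈ ⋃ i, T i
        · rw [indicator_of_mem h]
        · simp [F, hx h]
    _ ≤ ∫⁻ x in ⋃ i, T i, F x := by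
        rw [← lintegral_indicator hTUnion]; exact setLIntegral_le_lintegral _ _
    _ ≤ ∑' i, ∫⁻ x in T i, F x := lintegral_iUnion_le _ _
    _ = ∑' i, ∫⁻ y in f '' T i, W y := by
        congr with i
        rw [lintegral_image_eq_lintegral_abs_deriv_mul (hTmeas i) (hφ i) (hTinj i)]
        refine lintegral_congr_ae ((hφae i).mono fun x hx => ?_)
        simp only [F, hx, Real.enorm_eq_ofReal_abs]
    _ ≤ K * ∫⁻ y in ⋃ i, f '' T i, W y := by
        refine tsum_setLIntegral_le_of_encard_le hfTmeas hW (hK.mono fun y hy => ?_)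
        refine ENat.toENNReal_le.2 ((encard_setOf_mem_image_le hTdisj f y).trans
          ((encard_le_encard ?_).trans hy)) |>.trans_eq (ENat.toENNReal_coe K)
        exact inter_subset_inter_left _ (iUnion_subset hTE)

theorem volume_image_eq_zero_of_approxDeriv_ae_eq_zero (hE : MeasurableSet E) (hf : Measurable f)
    (hdiff : volume {x ∈ E | ¬∃ a, HasApproxDerivAt E f a x} = 0)
    (hluzin : ∀ A ⊆ E, volume A = 0 → volume (f '' A) = 0)
    (hzero : ∀ᵐ x ∂volume.restrict E, approxDeriv E f x = 0) : volume (f '' E) = 0 := by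
  obtain ⟨D, φ, hDmeas, -, hDE, hDnull, -, hφ, hφae⟩ := exists_hasDerivWithinAt_pieces hE hf hdiff
  have hD : ∀ p, volume (f '' D p) = 0 := fun p => by
    have hφ0 : ∀ᵐ x ∂volume.restrict (D p), ENNReal.ofReal |φ p x| = 0 := by
      filter_upwards [hφae p, ae_restrict_of_ae_restrict_of_subset (hDE p) hzero] with x h1 h2
      rw [← h1, h2, abs_zero, ENNReal.ofReal_zero]
    refine le_antisymm ?_ zero_le
    calc volume (f '' D p) ≤ ∫⁻ x in D p, ENNReal.ofReal |φ p x| := by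
          simpa only [ContinuousLinearMap.det_toSpanSingleton] using
            addHaar_image_le_lintegral_abs_det_fderiv volume (hDmeas p)
              fun x hx => (hφ p x hx).hasFDerivWithinAt
      _ = 0 := by rw [lintegral_congr_ae hφ0, lintegral_zero]
  have hcover : f '' E ⊆ (⋃ p, f '' D p) ∪ f '' (E \ ⋃ p, D p) := by
    rw [← image_iUnion, ← image_union, union_sdiff_self]
    exact image_mono subset_union_right
  exact measure_mono_null hcover
    (measure_union_null (measure_iUnion_null hD) (hluzin _ sdiff_subset hDnull))

end ChangeOfVariables

section WeightedComp

variable {α ι : Type*} [Fintype ι]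

def weightedComp (g : ι → α → ℝ) (f : ι → α → α) : (α → ℝ) →ₗ[ℝ] α → ℝ where
  toFun h x := ∑ n, g n x * h (f n x)
  map_add' h₁ h₂ := by ext x; simp [mul_add, Finset.sum_add_distrib]
  map_smul' c h := by ext x; simp [Finset.mul_sum, mul_left_comm]

theorem measurable_weightedComp [MeasurableSpace α] {g : ι → α → ℝ} {f : ι → α → α}
    (hg : ∀ n, Measurable (g n)) (hf : ∀ n, Measurable (f n)) {h : α → ℝ} (hh : Measurable h) :
    Measurable (weightedComp g f h) :=
  show Measurable fun x => ∑ n, g n x * h (f n x) by fun_prop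

theorem comp_ae_eq_of_preimage_null {β : Type*} [MeasurableSpace α] {μ : Measure α} {s : Set α}
    (hs : MeasurableSet s) {f : α → α} (hmaps : MapsTo f s s)
    (hnull : ∀ A, μ A = 0 → μ (s ∩ f ⁻¹' A) = 0) {h₁ h₂ : α → β}
    (h : h₁ =ᵐ[μ.restrict s] h₂) : h₁ ∘ f =ᵐ[μ.restrict s] h₂ ∘ f := by
  rw [EventuallyEq, ae_restrict_iff' hs] at h ⊢
  filter_upwards [measure_eq_zero_iff_ae_notMem.1 (hnull _ (ae_iff.1 h))] with x hx hxs
  by_contra hne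
  exact hx ⟨hxs, fun h' => hne (h' (hmaps hxs))⟩

theorem weightedComp_ae_eq_of_preimage_null [MeasurableSpace α] {μ : Measure α} {s : Set α}
    (hs : MeasurableSet s) {g : ι → α → ℝ} {f : ι → α → α} (hmaps : ∀ n, MapsTo (f n) s s)
    (hnull : ∀ n A, μ A = 0 → μ (s ∩ f n ⁻¹' A) = 0) {h₁ h₂ : α → ℝ}
    (h : h₁ =ᵐ[μ.restrict s] h₂) : weightedComp g f h₁ =ᵐ[μ.restrict s] weightedComp g f h₂ := by
  filter_upwards [ae_all_iff.2 fun n => comp_ae_eq_of_preimage_null hs (hmaps n) (hnull n) h]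
    with x hx
  exact Finset.sum_congr rfl fun n _ => congrArg _ (hx n)

end WeightedComp

theorem exists_clm_Lp_one_of_lintegral_le {α : Type*} [MeasurableSpace α] {μ : Measure α}
    (Φ : (α → ℝ) →ₗ[ℝ] α → ℝ) (hΦae : ∀ h₁ h₂, h₁ =ᵐ[μ] h₂ → Φ h₁ =ᵐ[μ] Φ h₂)
    (hΦmeas : ∀ h, Measurable h → Measurable (Φ h)) {C : ℝ} (hC : 0 ≤ C)
    (hΦle : ∀ h, Measurable h → ∫⁻ x, ‖Φ h x‖ₑ ∂μ ≤ ENNReal.ofReal C * ∫⁻ x, ‖h x‖ₑ ∂μ) :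
    ∃ P : Lp ℝ 1 μ →L[ℝ] Lp ℝ 1 μ, (∀ h, P h =ᵐ[μ] Φ h) ∧ ‖P‖ ≤ C := by
  have hrep : ∀ h : Lp ℝ 1 μ, ∃ h', Measurable h' ∧ h =ᵐ[μ] h' := fun h =>
    ⟨_, (Lp.aestronglyMeasurable h).aemeasurable.measurable_mk,
      (Lp.aestronglyMeasurable h).aemeasurable.ae_eq_mk⟩
  have hle : ∀ h : Lp ℝ 1 μ, eLpNorm (Φ h) 1 μ ≤ ENNReal.ofReal C * eLpNorm h 1 μ := fun h => by
    obtain ⟨h', hm, he⟩ := hrep h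
    rw [eLpNorm_congr_ae (hΦae _ _ he), eLpNorm_congr_ae he, eLpNorm_one_eq_lintegral_enorm,
      eLpNorm_one_eq_lintegral_enorm]
    exact hΦle h' hm
  have hmem : ∀ h : Lp ℝ 1 μ, MemLp (Φ h) 1 μ := fun h => by
    obtain ⟨h', hm, he⟩ := hrep h
    exact ⟨(hΦmeas h' hm).aestronglyMeasurable.congr (hΦae _ _ he).symm,
      (hle h).trans_lt (ENNReal.mul_lt_top ENNReal.ofReal_lt_top (Lp.eLpNorm_lt_top h))⟩
  let P : Lp ℝ 1 μ →ₗ[ℝ] Lp ℝ 1 μ :=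
    { toFun := fun h => (hmem h).toLp
      map_add' := fun h₁ h₂ => by
        rw [← MemLp.toLp_add]
        exact MemLp.toLp_congr _ _ ((hΦae _ _ (Lp.coeFn_add h₁ h₂)).trans (.of_eq (map_add ..)))
      map_smul' := fun c h => by
        rw [RingHom.id_apply, ← MemLp.toLp_const_smul]
        exact MemLp.toLp_congr _ _
          ((hΦae _ _ (Lp.coeFn_smul c h)).trans (.of_eq (map_smul ..))) }
  have hP : ∀ h, ‖P h‖ ≤ C * ‖h‖ := fun h => by
    change ‖(hmem h).toLp‖ ≤ C * ‖h‖
    rw [Lp.norm_toLp, Lp.norm_def, ← ENNReal.toReal_ofReal hC, ← ENNReal.toReal_mul]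
    exact ENNReal.toReal_mono
      (ENNReal.mul_ne_top ENNReal.ofReal_ne_top (Lp.eLpNorm_ne_top h)) (hle h)
  exact ⟨P.mkContinuous C hP, fun h => (hmem h).coeFn_toLp, LinearMap.mkContinuous_norm_le _ hC _⟩

theorem measure_biInter_eq_zero_of_isGreatest {α : Type*} [MeasurableSpace α] {μ : Measure α}
    {N L : ℕ} {V : Fin N → Set α}
    (hL : IsGreatest {m : ℕ | 1 ≤ m ∧ m ≤ N ∧ ∃ s : Finset (Fin N), s.card = m ∧
      0 < μ (⋂ n ∈ s, V n)} L) (s : Finset (Fin N)) (hs : s.card = L + 1) :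
    μ (⋂ n ∈ s, V n) = 0 := by
  by_contra hpos
  have := hL.2 ⟨by omega, hs ▸ (s.card_le_univ.trans_eq (Fintype.card_fin N)), s, hs,
    pos_iff_ne_zero.2 hpos⟩
  omega

section MainEstimate

variable {E : Set ℝ} {f : ℝ → ℝ}

theorem ae_encard_inter_preimage_le (hmaps : MapsTo f E E) {K : ℕ}
    (hK : volume {y ∈ E | (K : ℕ∞) < (E ∩ f ⁻¹' {y}).encard} = 0) :
    ∀ᵐ y, (E ∩ f ⁻¹' {y}).encard ≤ K := by
  refine ae_iff.2 (measure_mono_null (fun y hy => ?_) hK)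
  obtain ⟨x, hx, hxy⟩ := nonempty_of_encard_ne_zero fun h => hy (h ▸ zero_le)
  exact ⟨hxy ▸ hmaps hx, not_le.1 hy⟩

theorem one_le_of_ae_encard_le (himage : 0 < volume (f '' E)) {K : ℕ}
    (hK : ∀ᵐ y, (E ∩ f ⁻¹' {y}).encard ≤ K) : 1 ≤ K := by
  by_contra! hK0
  refine himage.ne' (measure_mono_null ?_ (ae_iff.1 hK))
  rintro _ ⟨x, hx, rfl⟩ hle
  rw [Nat.lt_one_iff.1 hK0, Nat.cast_zero, nonpos_iff_eq_zero, encard_eq_zero] at hle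
  exact hle.subset ⟨hx, rfl⟩

theorem nonneg_of_abs_le_mul_abs_approxDeriv (hE : MeasurableSet E) (hf : Measurable f)
    (hdiff : volume {x ∈ E | ¬∃ a, HasApproxDerivAt E f a x} = 0)
    (hluzin : ∀ A ⊆ E, volume A = 0 → volume (f '' A) = 0) (himage : 0 < volume (f '' E))
    {g : ℝ → ℝ} {c : ℝ} (hg : ∀ᵐ x ∂volume.restrict E, |g x| ≤ c * |approxDeriv E f x|) :
    0 ≤ c := by
  by_contra! hc
  refine himage.ne' (volume_image_eq_zero_of_approxDeriv_ae_eq_zero hE hf hdiff hluzin ?_)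
  filter_upwards [hg] with x hx
  by_contra hne
  linarith [abs_nonneg (g x), mul_neg_of_neg_of_pos hc (abs_pos.2 hne)]

theorem lintegral_enorm_weightedComp_le {ι : Type*} [Fintype ι] (hE : MeasurableSet E)
    {f g : ι → ℝ → ℝ} (hf : ∀ n, Measurable (f n)) (hg : ∀ n, Measurable (g n))
    (hmaps : ∀ n, MapsTo (f n) E E)
    (hdiff : ∀ n, volume {x ∈ E | ¬∃ a, HasApproxDerivAt E (f n) a x} = 0) {K L : ℕ}
    (hK : ∀ n, ∀ᵐ y, (E ∩ f n ⁻¹' {y}).encard ≤ K)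
    (hL : ∀ s : Finset ι, s.card = L + 1 → volume (⋂ n ∈ s, f n '' E) = 0) {c : ℝ} (hc : 0 ≤ c)
    (hgf : ∀ n, ∀ᵐ x ∂volume.restrict E, |g n x| ≤ c * |approxDeriv E (f n) x|)
    {h : ℝ → ℝ} (hh : Measurable h) :
    ∫⁻ x in E, ‖weightedComp g f h x‖ₑ ≤ ENNReal.ofReal (c * (K * L)) * ∫⁻ y in E, ‖h y‖ₑ := by
  choose U hUf hUmeas hU using fun n =>
    exists_lintegral_approxDeriv_mul_le hE (hf n) (hdiff n) (hK n)
  have hW : Measurable fun y => ‖h y‖ₑ := hh.enorm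
  calc ∫⁻ x in E, ‖weightedComp g f h x‖ₑ
      ≤ ∫⁻ x in E, ∑ n, ‖g n x‖ₑ * ‖h (f n x)‖ₑ :=
        lintegral_mono fun x => (enorm_sum_le _ _).trans_eq (by simp only [enorm_mul])
    _ = ∑ n, ∫⁻ x in E, ‖g n x‖ₑ * ‖h (f n x)‖ₑ :=
        lintegral_finsetSum _ fun n _ => (hg n).enorm.mul (hW.comp (hf n))
    _ ≤ ∑ n, ENNReal.ofReal c * ∫⁻ x in E, ‖approxDeriv E (f n) x‖ₑ * ‖h (f n x)‖ₑ := by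
        refine Finset.sum_le_sum fun n _ => ?_
        rw [← lintegral_const_mul' _ _ ENNReal.ofReal_ne_top]
        refine lintegral_mono_ae ((hgf n).mono fun x hx => ?_)
        simp only [Real.enorm_eq_ofReal_abs, ← mul_assoc, ← ENNReal.ofReal_mul hc]
        gcongr
    _ ≤ ∑ n, ENNReal.ofReal c * (K * ∫⁻ y in U n, ‖h y‖ₑ) := by
        gcongr with n; exact hU n _ hW
    _ = ENNReal.ofReal c * K * ∑ n, ∫⁻ y in U n, ‖h y‖ₑ := by
        rw [Finset.mul_sum]; simp only [mul_assoc]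
    _ ≤ ENNReal.ofReal c * K * (L * ∫⁻ y in ⋃ n, U n, ‖h y‖ₑ) := by
        gcongr
        exact sum_setLIntegral_le_of_inter_null hUmeas
          (fun s hs => measure_mono_null (iInter₂_mono fun n _ => hUf n) (hL s hs)) hW
    _ ≤ ENNReal.ofReal c * K * (L * ∫⁻ y in E, ‖h y‖ₑ) := by
        gcongr
        exact iUnion_subset fun n => (hUf n).trans (hmaps n).image_subset
    _ = ENNReal.ofReal (c * (K * L)) * ∫⁻ y in E, ‖h y‖ₑ := by
        rw [ENNReal.ofReal_mul hc, ENNReal.ofReal_mul (by positivity), ENNReal.ofReal_natCast,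
          ENNReal.ofReal_natCast]
        ring

end MainEstimate

theorem stmt8 (N : ℕ) (f g' : Fin N → ℝ → ℝ)
    (hfmeas : ∀ n, Measurable (f n)) (hgmeas : ∀ n, Measurable (g' n))
    (hmaps : ∀ n, MapsTo (f n) (Icc 0 1) (Icc 0 1))
    -- (H₁): each fₙ is approximately differentiable a.e. and satisfies Luzin's condition N
    (H1diff : ∀ n,
      MeasureTheory.volume {x ∈ Icc (0 : ℝ) 1 | ¬∃ a, HasApproxDerivAt (Icc 0 1) (f n) a x} = 0)
    (H1LuzinN : ∀ n, ∀ A ⊆ Icc (0 : ℝ) 1,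
      MeasureTheory.volume A = 0 → MeasureTheory.volume (f n '' A) = 0)
    -- (H₂): the set {x ∈ [0,1] : card fₙ⁻¹(x) > K} is null
    (K : ℕ)
    (H2 : ∀ n,
      MeasureTheory.volume {y ∈ Icc (0 : ℝ) 1 | (K : ℕ∞) < (Icc (0 : ℝ) 1 ∩ f n ⁻¹' {y}).encard} = 0)
    -- (H₃): preimages of null sets are null
    (H3 : ∀ n, ∀ A : Set ℝ,
      MeasureTheory.volume A = 0 → MeasureTheory.volume (Icc (0 : ℝ) 1 ∩ f n ⁻¹' A) = 0)
    -- L is the largest m such that some m-fold intersection of images has positive measure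
    (L : ℕ)
    (hL : IsGreatest {m : ℕ | 1 ≤ m ∧ m ≤ N ∧
      ∃ s : Finset (Fin N), s.card = m ∧
        0 < MeasureTheory.volume (⋂ n ∈ s, f n '' Icc (0 : ℝ) 1)} L)
    -- |gₙ(x)| ≤ (C/(KL)) |fₙ'(x)| a.e.
    (C : ℝ)
    (hC : ∀ n, ∀ᵐ x ∂μ01,
      |g' n x| ≤ C / ((K : ℝ) * (L : ℝ)) * |approxDeriv (Icc 0 1) (f n) x|) :
    -- the formula is independent of the choice of representative …
    (∀ h₁ h₂ : ℝ → ℝ, h₁ =ᵐ[μ01] h₂ →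
      (fun x => ∑ n, g' n x * h₁ (f n x)) =ᵐ[μ01] fun x => ∑ n, g' n x * h₂ (f n x)) ∧
    -- … and defines a continuous linear operator P on L¹([0,1]) with ‖P‖ ≤ C
    ∃ P : Lp ℝ 1 μ01 →L[ℝ] Lp ℝ 1 μ01,
      (∀ h : Lp ℝ 1 μ01,
        (P h : ℝ → ℝ) =ᵐ[μ01] fun x => ∑ n, g' n x * (h : ℝ → ℝ) (f n x)) ∧
      ‖P‖ ≤ C := by
  obtain ⟨hL1, -, s₀, hs₀card, hs₀pos⟩ := hL.1
  obtain ⟨n₀, hn₀⟩ : s₀.Nonempty := Finset.card_pos.1 (hs₀card ▸ hL1)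
  have himage : 0 < volume (f n₀ '' Icc 0 1) :=
    hs₀pos.trans_le (measure_mono (biInter_subset_of_mem hn₀))
  have hK : ∀ n, ∀ᵐ y, (Icc (0 : ℝ) 1 ∩ f n ⁻¹' {y}).encard ≤ K := fun n =>
    ae_encard_inter_preimage_le (hmaps n) (H2 n)
  have hKL : (0 : ℝ) < K * L := by
    have := one_le_of_ae_encard_le himage (hK n₀)
    positivity
  have hc : 0 ≤ C / (K * L) := nonneg_of_abs_le_mul_abs_approxDeriv measurableSet_Icc
    (hfmeas n₀) (H1diff n₀) (H1LuzinN n₀) himage (hC n₀)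
  have hcongr : ∀ h₁ h₂ : ℝ → ℝ, h₁ =ᵐ[μ01] h₂ →
      weightedComp g' f h₁ =ᵐ[μ01] weightedComp g' f h₂ :=
    fun _ _ => weightedComp_ae_eq_of_preimage_null measurableSet_Icc hmaps H3
  refine ⟨hcongr, exists_clm_Lp_one_of_lintegral_le (weightedComp g' f) hcongr
    (fun _ => measurable_weightedComp hgmeas hfmeas) ?_ fun h hh => ?_⟩
  · simpa [div_mul_cancel₀ C hKL.ne'] using mul_nonneg hc hKL.le
  simpa only [div_mul_cancel₀ C hKL.ne'] using lintegral_enorm_weightedComp_le measurableSet_Icc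
    hfmeas hgmeas hmaps H1diff hK (measure_biInter_eq_zero_of_isGreatest hL) hc hC hh
end
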